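/- arXiv:1502.07730 — 2 statements merged into one kernel-verified Lean document; each statement's English description precedes it below -/
import Mathlib

section
/- Let n be a positive integer and let w_1 ≤ w_2 ≤ … ≤ w_m be a feasible partition of n with m ≥ 1, and let R_{m−1} = w_1 + … + w_{m−1}. Then R_{m−1} ≥ ⌈(n − 1)/3⌉. -/
/-- `w 0, w 1, …, w (m-1)` (1-indexed as `w_1 ≤ … ≤ w_m` in the paper) is a
weighing sequence for `n`: a nondecreasing list of `m` positive integers summing
to `n` such that every integer `1 ≤ k ≤ n` can be written as
`k = u_1 w_1 + … + u_m w_m` with each `u_i ∈ {-1, 0, 1}`. -/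
def IsWeighingSeq (n m : ℕ) (w : ℕ → ℕ) : Prop :=
  (∀ i, i < m → 0 < w i) ∧
  (∀ i j, i ≤ j → j < m → w i ≤ w j) ∧
  (∑ i ∈ Finset.range m, w i) = n ∧
  ∀ k : ℤ, 1 ≤ k → k ≤ (n : ℤ) →
    ∃ u : ℕ → ℤ, (∀ i, u i = -1 ∨ u i = 0 ∨ u i = 1) ∧
      k = ∑ i ∈ Finset.range m, u i * (w i : ℤ)


/-- A feasible partition of `n`: a weighing sequence for `n` of minimal length. -/
def IsFeasible (n m : ℕ) (w : ℕ → ℕ) : Prop :=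
  IsWeighingSeq n m w ∧ ∀ (m' : ℕ) (w' : ℕ → ℕ), IsWeighingSeq n m' w' → m ≤ m'

/-!
Write `n = R + w_m` with `R = R_{m-1}`. Since `w_m ≥ 1`, the integer `R + 1` lies in `[1, n]` and so
is a signed sum `S + u_m w_m` with `|S| ≤ R`. The coefficient `u_m` must be `1`, since otherwise
`R + 1 ≤ R`; hence `w_m = R + 1 - S ≤ 2R + 1` and `n ≤ 3R + 1`.
-/

theorem abs_sum_mul_le_sum {ι α : Type*} [Ring α] [LinearOrder α] [IsStrictOrderedRing α]
    (s : Finset ι) (u w : ι → α)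
    (hu : ∀ i ∈ s, |u i| ≤ 1) (hw : ∀ i ∈ s, 0 ≤ w i) :
    |∑ i ∈ s, u i * w i| ≤ ∑ i ∈ s, w i :=
  (Finset.abs_sum_le_sum_abs _ _).trans <| Finset.sum_le_sum fun i hi => by
    rw [abs_mul, abs_of_nonneg (hw i hi)]
    exact mul_le_of_le_one_left (hw i hi) (hu i hi)

theorem IsWeighingSeq.le_three_mul_sum_add_one {n m : ℕ} {w : ℕ → ℕ}
    (hw : IsWeighingSeq n (m + 1) w) : n ≤ 3 * ∑ i ∈ Finset.range m, w i + 1 := by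
  obtain ⟨hpos, -, hsum, hrep⟩ := hw
  set R : ℤ := ∑ i ∈ Finset.range m, (w i : ℤ)
  have hn : (n : ℤ) = R + w m := by
    rw [← hsum, Finset.sum_range_succ]; push_cast; rfl
  have hlast : (1 : ℤ) ≤ w m := by exact_mod_cast hpos m m.lt_succ_self
  have hR0 : 0 ≤ R := by positivity
  obtain ⟨u, hu, hk⟩ := hrep (R + 1) (by linarith) (by linarith)
  rw [Finset.sum_range_succ] at hk
  have hS : |∑ i ∈ Finset.range m, u i * (w i : ℤ)| ≤ R :=
    abs_sum_mul_le_sum _ _ _ (fun i _ => by rcases hu i with h | h | h <;> simp [h])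
      (fun i _ => by positivity)
  have hlast_le : (w m : ℤ) ≤ 2 * R + 1 := by
    rcases abs_le.mp hS with ⟨hS₁, hS₂⟩
    rcases hu m with h | h | h <;> rw [h] at hk <;> linarith
  zify
  linarith

theorem penultimate_partial_sum_ge_ceil_general (n m : ℕ) (w : ℕ → ℕ)
    (hm : 1 ≤ m) (hw : IsFeasible n m w) :
    ((∑ j ∈ Finset.range (m - 1), w j : ℕ) : ℤ) ≥ ⌈((n : ℚ) - 1) / 3⌉ := by
  obtain ⟨k, rfl⟩ : ∃ k, m = k + 1 := ⟨m - 1, by omega⟩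
  have hbound := hw.1.le_three_mul_sum_add_one
  rw [Nat.add_sub_cancel, ge_iff_le, Int.ceil_le, div_le_iff₀ three_pos]
  have : (n : ℚ) ≤ 3 * (∑ i ∈ Finset.range k, w i : ℕ) + 1 := by exact_mod_cast hbound
  push_cast at this ⊢
  linarith

/-- For a feasible partition of `n` with `m ≥ 1` parts, the sum of the first
`m - 1` parts satisfies `R_(m-1) ≥ ⌈(n - 1) / 3⌉`. -/
theorem penultimate_partial_sum_ge_ceil (n m : ℕ) (w : ℕ → ℕ)
    (hn : 0 < n) (hm : 1 ≤ m) (hw : IsFeasible n m w) :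
    ((∑ j ∈ Finset.range (m - 1), w j : ℕ) : ℤ) ≥ ⌈((n : ℚ) - 1) / 3⌉ :=
  penultimate_partial_sum_ge_ceil_general n m w hm hw
end

section
/- Let m ≥ 2 and let n be an integer with (3^{m−1} + 1)/2 + 3^{m−2} + 1 ≤ n ≤ (3^m − 1)/2. Then the list 3^0, 3^1, …, 3^{m−2}, n − (3^{m−1} − 1)/2 is a feasible partition of n (an m-part weighing sequence for n of minimal length) whose first m − 1 parts sum to R_{m−1} = (3^{m−1} − 1)/2; that is, the upper bound (3^{m−1} − 1)/2 for R_{m−1} is attained. -/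
/-! Balanced ternary: the signed sums of `3^0, …, 3^(r-1)` are exactly the integers of
absolute value at most `S = (3^r - 1)/2`, so appending one weight `a` with `3^(r-1) ≤ a ≤ 3^r`
lets signed sums reach every integer up to `S + a`. Conversely, `m` weights have at most `3^m`
signed sums, which must cover `-n, …, n`; so `2n + 1 ≤ 3^m`, and since `2n + 1 > 3^(m-1)` no
shorter sequence exists. -/

open Finset

def IsSignedSum (m : ℕ) (w : ℕ → ℕ) (k : ℤ) : Prop :=
  ∃ u : ℕ → ℤ, (∀ i, u i = -1 ∨ u i = 0 ∨ u i = 1) ∧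
    k = ∑ i ∈ range m, u i * (w i : ℤ)

namespace IsSignedSum

variable {m : ℕ} {w : ℕ → ℕ} {k : ℤ}

theorem zero : IsSignedSum m w 0 :=
  ⟨fun _ => 0, fun _ => Or.inr (Or.inl rfl), by simp⟩

theorem neg (h : IsSignedSum m w k) : IsSignedSum m w (-k) := by
  obtain ⟨u, hu, rfl⟩ := h
  refine ⟨fun i => -u i, fun i => ?_, by simp [sum_neg_distrib]⟩
  rcases hu i with h | h | h <;> simp [h]

theorem congr {w' : ℕ → ℕ} (h : IsSignedSum m w k) (hw : ∀ i < m, w i = w' i) :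
    IsSignedSum m w' k := by
  obtain ⟨u, hu, rfl⟩ := h
  exact ⟨u, hu, sum_congr rfl fun i hi => by rw [hw i (mem_range.mp hi)]⟩

theorem snoc (h : IsSignedSum m w k) {c : ℤ} (hc : c = -1 ∨ c = 0 ∨ c = 1) :
    IsSignedSum (m + 1) w (k + c * w m) := by
  obtain ⟨u, hu, rfl⟩ := h
  refine ⟨Function.update u m c, fun i => ?_, ?_⟩
  · rcases eq_or_ne i m with rfl | hi
    · simpa using hc
    · simpa [hi] using hu i
  · rw [sum_range_succ, Function.update_self]
    congr 1
    exact sum_congr rfl fun i hi => by rw [Function.update_of_ne (mem_range.mp hi).ne]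

theorem card_le_three_pow {s : Finset ℤ} (hs : ∀ k ∈ s, IsSignedSum m w k) :
    #s ≤ 3 ^ m := by
  let signs : Finset (Fin m → ℤ) := Fintype.piFinset fun _ => {-1, 0, 1}
  have hsub : s ⊆ signs.image fun u => ∑ i : Fin m, u i * (w i : ℤ) := by
    intro k hk
    obtain ⟨u, hu, rfl⟩ := hs k hk
    refine mem_image.mpr ⟨fun i => u i, Fintype.mem_piFinset.mpr fun i => ?_, ?_⟩
    · rcases hu i with h | h | h <;> simp [h]
    · exact (Fin.sum_univ_eq_sum_range (fun i => u i * (w i : ℤ)) m)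
  calc #s ≤ #(signs.image _) := card_le_card hsub
    _ ≤ #signs := card_image_le
    _ = 3 ^ m := by simp [signs]

end IsSignedSum

theorem isSignedSum_three_pow {m : ℕ} {k : ℤ} (hk : 2 * |k| < 3 ^ m) :
    IsSignedSum m (3 ^ ·) k := by
  induction m generalizing k with
  | zero =>
    obtain rfl : k = 0 := abs_eq_zero.mp (by have := abs_nonneg k; simp at hk; omega)
    exact IsSignedSum.zero
  | succ m ih =>
    obtain ⟨t, ht⟩ : Odd ((3 : ℤ) ^ m) := Odd.pow (by decide)
    have hk' : -(3 * t + 1) ≤ k ∧ k ≤ 3 * t + 1 :=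
      abs_le.mp (by rw [pow_succ, ht] at hk; omega)
    -- `c * 3^m` is the multiple of `3^m` nearest to `k`
    obtain ⟨c, hc, hkc⟩ : ∃ c : ℤ, (c = -1 ∨ c = 0 ∨ c = 1) ∧
        -t ≤ k - c * (2 * t + 1) ∧ k - c * (2 * t + 1) ≤ t := by
      by_cases hbig : t < k
      · exact ⟨1, by simp, by omega⟩
      by_cases hsmall : k < -t
      · exact ⟨-1, by simp, by omega⟩
      · exact ⟨0, by simp, by omega⟩
    have hrest := ih (k := k - c * 3 ^ m) (by rw [ht]; have := abs_le.mpr hkc; omega)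
    simpa using hrest.snoc hc

theorem IsWeighingSeq.two_mul_add_one_le_three_pow {n m : ℕ} {w : ℕ → ℕ}
    (hw : IsWeighingSeq n m w) : 2 * n + 1 ≤ 3 ^ m := by
  have hrep : ∀ k ∈ Icc (-(n : ℤ)) n, IsSignedSum m w k := by
    intro k hk
    obtain ⟨hlo, hhi⟩ := mem_Icc.mp hk
    rcases lt_trichotomy k 0 with hneg | rfl | hpos
    · simpa using IsSignedSum.neg (hw.2.2.2 (-k) (by omega) (by omega))
    · exact IsSignedSum.zero
    · exact hw.2.2.2 k hpos hhi
  have := IsSignedSum.card_le_three_pow hrep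
  rw [Int.card_Icc] at this
  omega

theorem two_mul_sum_range_three_pow_add_one (r : ℕ) :
    2 * ∑ i ∈ range r, 3 ^ i + 1 = 3 ^ r := by
  induction r with
  | zero => rfl
  | succ r ih => rw [sum_range_succ, pow_succ]; omega

theorem isWeighingSeq_three_pows_then (r a : ℕ) (ha : 3 ^ (r - 1) ≤ a) (ha' : a ≤ 3 ^ r) :
    IsWeighingSeq (∑ i ∈ range r, 3 ^ i + a) (r + 1) (fun i => if i < r then 3 ^ i else a) := by
  set w : ℕ → ℕ := fun i => if i < r then 3 ^ i else a
  have hS := two_mul_sum_range_three_pow_add_one r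
  refine ⟨fun i _ => ?_, fun i j hij hj => ?_, ?_, fun k hk1 hkn => ?_⟩
  · have := Nat.one_le_pow (r - 1) 3 (by norm_num)
    simp only [w]; split_ifs
    · positivity
    · omega
  · simp only [w]
    split_ifs with hi hj'
    · exact Nat.pow_le_pow_right (by norm_num) hij
    · exact (Nat.pow_le_pow_right (by norm_num) (by omega)).trans ha
    · omega
    · rfl
  · rw [sum_range_succ]
    simp only [w, lt_irrefl, if_false]
    congr 1
    exact sum_congr rfl fun i hi => if_pos (mem_range.mp hi)
  · show IsSignedSum (r + 1) w k
    have hpow : ∀ {k : ℤ}, 2 * |k| < 3 ^ r → IsSignedSum r w k := fun hk =>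
      (isSignedSum_three_pow hk).congr fun i hi => (if_pos hi).symm
    have hwr : (w r : ℤ) = a := by simp [w]
    set S := ∑ i ∈ range r, 3 ^ i
    have hSZ : 2 * (S : ℤ) + 1 = 3 ^ r := by exact_mod_cast hS
    have haZ : (a : ℤ) ≤ 3 ^ r := by exact_mod_cast ha'
    push_cast at hkn
    by_cases hsmall : 2 * k < 3 ^ r
    · simpa using (hpow (k := k) (by rw [abs_of_pos (by omega)]; exact hsmall)).snoc
        (c := 0) (by simp)
    · have hrest : |k - a| ≤ S := abs_le.mpr ⟨by omega, by omega⟩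
      simpa [hwr] using (hpow (k := k - a) (by omega)).snoc (c := 1) (by simp)

/-- For `m ≥ 2` and `(3^(m-1) + 1)/2 + 3^(m-2) + 1 ≤ n ≤ (3^m - 1)/2`
(stated doubled), the list `3^0, 3^1, …, 3^(m-2), n - (3^(m-1) - 1)/2` is a
feasible partition of `n` with `m` parts whose first `m - 1` parts sum to
`R_(m-1) = (3^(m-1) - 1) / 2`; so the upper bound is attained. -/
theorem powers_then_rest_is_feasible (m n : ℕ) (hm : 2 ≤ m)
    (h1 : 3 ^ (m - 1) + 2 * 3 ^ (m - 2) + 3 ≤ 2 * n) (h2 : 2 * n ≤ 3 ^ m - 1) :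
    IsFeasible n m (fun i => if i < m - 1 then 3 ^ i else n - (3 ^ (m - 1) - 1) / 2) ∧
      (∑ j ∈ Finset.range (m - 1),
        (fun i => if i < m - 1 then 3 ^ i else n - (3 ^ (m - 1) - 1) / 2) j) =
        (3 ^ (m - 1) - 1) / 2 := by
  obtain ⟨r, rfl⟩ : ∃ r, m = r + 2 := ⟨m - 2, by omega⟩
  simp only [Nat.add_sub_cancel, Nat.add_succ_sub_one] at h1 ⊢
  have hS := two_mul_sum_range_three_pow_add_one (r + 1)
  rw [show (3 ^ (r + 1) - 1) / 2 = ∑ i ∈ range (r + 1), 3 ^ i by omega]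
  set S := ∑ i ∈ range (r + 1), 3 ^ i
  have h3 : 3 ^ (r + 2) = 3 * 3 ^ (r + 1) := pow_succ' 3 (r + 1)
  have hw := isWeighingSeq_three_pows_then (r + 1) (n - S)
    (by simp only [Nat.add_sub_cancel]; omega) (by omega)
  rw [show S + (n - S) = n by omega] at hw
  refine ⟨⟨hw, fun m' w' hw' => ?_⟩, sum_congr rfl fun i hi => if_pos (mem_range.mp hi)⟩
  have := hw'.two_mul_add_one_le_three_pow
  exact (Nat.pow_lt_pow_iff_right (a := 3) (by norm_num)).mp (by omega)
end
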